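/- Let m, n, k ≥ 1, let 1 ≤ i_1 < ⋯ < i_k ≤ m, let j_1, …, j_k be pairwise distinct elements of {1,…,n}, and let β be the join of the join-congruences cg(i_1,j_1), …, cg(i_k,j_k) of the grid K_{m,n}. Then β is cover-preserving: on the quotient Q = K_{m,n}/β, the relation [a] ≤ [b] ⟺ (a ⊔ b, b) ∈ β is a well-defined partial order, and whenever a ⋖ b (a is covered by b) in K_{m,n}, either [a] = [b] or [a] is covered by [b] in Q. -/

import Mathlib

/-- The grid `K_{m,n}`: the lattice `{0,…,m} × {0,…,n}` ordered componentwise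
(join and meet are componentwise max and min). -/
abbrev Grid (m n : ℕ) := Fin (m + 1) × Fin (n + 1)

/-- A join-congruence of a join-semilattice: an equivalence relation compatible with
joining a fixed element. -/
def IsJoinCong {α : Type*} [SemilatticeSup α] (r : α → α → Prop) : Prop :=
  Equivalence r ∧ ∀ a b c : α, r a b → r (a ⊔ c) (b ⊔ c)

/-- The join-congruence generated by a relation `R`: the smallest join-congruence
containing `R` (the intersection of all join-congruences containing `R`). -/
def joinCongGen {α : Type*} [SemilatticeSup α] (R : α → α → Prop) : α → α → Prop :=
  fun a b => ∀ r : α → α → Prop, IsJoinCong r → (∀ x y, R x y → r x y) → r a b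

/-- The join of a family of join-congruences: the smallest join-congruence containing
all members of the family. -/
def joinCongSup {α : Type*} [SemilatticeSup α] {ι : Sort*} (f : ι → α → α → Prop) :
    α → α → Prop :=
  joinCongGen fun a b => ∃ i, f i a b

open Fin.NatCast in
/-- For `1 ≤ i ≤ m` and `1 ≤ j ≤ n`, the join-congruence `cg(i,j)` of the grid `K_{m,n}`
generated by the pairs `((i,j−1),(i,j))` and `((i−1,j),(i,j))`. -/
def cg (m n i j : ℕ) : Grid m n → Grid m n → Prop :=
  joinCongGen fun a b =>
    b = ((i : Fin (m + 1)), (j : Fin (n + 1))) ∧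
      (a = ((i : Fin (m + 1)), ((j - 1 : ℕ) : Fin (n + 1))) ∨
        a = (((i - 1 : ℕ) : Fin (m + 1)), (j : Fin (n + 1))))

/-!
The join-congruence generated by pairs `x ≤ y` of a finite lattice is the kernel of the closure
operator whose closed elements are the `w` with `x ≤ w → y ≤ w` for every generating pair, so the
quotient is the poset of closed elements. In the grid, `(p, q)` is closed iff no `(i_s, j_s)` equals
`(p + 1, ≤ q)` or `(≤ p, q + 1)`.

Since the grid is modular, a cover `a ⋖ b` with `[a] ≠ [b]` yields a cover `z ⋖ t` with `z = cl a`
and `cl t = cl b`, and it suffices that no closed `w` lies strictly between `z` and `cl t`. Say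
`t = z + e₁` and `z = (p, q)`; such a `w` would be `(p, q')` with `q' > q`. Move right from `t`
along row `q` as long as some `(i_s, j_s) = (x + 1, ≤ q)` forces it. At the stopping point no
`(i_s, q + 1)` with `i_s ≤ x` remains: `i_s ≤ p` is excluded by `z`, `i_s = p + 1` by `w`, and a
larger `i_s` is a column already crossed, whose unique generator has `j_s ≤ q`. This closed point
lies above `t` but not above `w`, so `w ≰ cl t`.
-/

section JoinCong

variable {α : Type*} [SemilatticeSup α] {r R : α → α → Prop} {a b : α}

theorem isJoinCong_joinCongGen (R : α → α → Prop) : IsJoinCong (joinCongGen R) :=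
  ⟨⟨fun a _ hr _ => hr.1.refl a,
      fun h r hr hR => hr.1.symm (h r hr hR),
      fun h₁ h₂ r hr hR => hr.1.trans (h₁ r hr hR) (h₂ r hr hR)⟩,
    fun a b c h r hr hR => hr.2 a b c (h r hr hR)⟩

theorem joinCongGen_of_rel {x y : α} (h : R x y) : joinCongGen R x y :=
  fun _ _ hR => hR x y h

theorem IsJoinCong.of_joinCongGen (hr : IsJoinCong r) (hR : ∀ x y, R x y → r x y)
    (h : joinCongGen R a b) : r a b :=
  h r hr hR

theorem joinCongSup_joinCongGen {ι : Sort*} (R : ι → α → α → Prop) :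
    joinCongSup (fun s => joinCongGen (R s)) = joinCongGen fun a b => ∃ s, R s a b := by
  ext a b
  refine ⟨fun h => (isJoinCong_joinCongGen _).of_joinCongGen ?_ h,
    fun h => (isJoinCong_joinCongGen _).of_joinCongGen ?_ h⟩
  · rintro x y ⟨s, hs⟩
    exact (isJoinCong_joinCongGen _).of_joinCongGen (fun x y h => joinCongGen_of_rel ⟨s, h⟩) hs
  · rintro x y ⟨s, hs⟩
    exact joinCongGen_of_rel ⟨s, joinCongGen_of_rel hs⟩

namespace IsJoinCong

theorem sup_sup (hr : IsJoinCong r) {a' b' : α} (ha : r a a') (hb : r b b') :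
    r (a ⊔ b) (a' ⊔ b') :=
  hr.1.trans (hr.2 a a' b ha) (by simpa only [sup_comm a'] using hr.2 b b' a' hb)

theorem sup_rel_congr (hr : IsJoinCong r) {a' b' : α} (ha : r a a') (hb : r b b') :
    r (a ⊔ b) b ↔ r (a' ⊔ b') b' :=
  ⟨fun h => hr.1.trans (hr.1.symm (hr.sup_sup ha hb)) (hr.1.trans h hb),
    fun h => hr.1.trans (hr.sup_sup ha hb) (hr.1.trans h (hr.1.symm hb))⟩

@[reducible] def quotPartialOrder (hr : IsJoinCong r) : PartialOrder (Quot r) where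
  le q₁ q₂ := Quot.liftOn₂ q₁ q₂ (fun a b => r (a ⊔ b) b)
    (fun _ _ _ hb => propext (hr.sup_rel_congr (hr.1.refl _) hb))
    (fun _ _ _ ha => propext (hr.sup_rel_congr ha (hr.1.refl _)))
  le_refl q := by
    induction q using Quot.ind with | _ a
    change r (a ⊔ a) a
    rw [sup_idem]
    exact hr.1.refl a
  le_trans q₁ q₂ q₃ := by
    induction q₁ using Quot.ind with | _ a
    induction q₂ using Quot.ind with | _ b
    induction q₃ using Quot.ind with | _ c
    intro (hab : r (a ⊔ b) b) (hbc : r (b ⊔ c) c)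
    change r (a ⊔ c) c
    have h : r (a ⊔ (b ⊔ c)) (b ⊔ c) := by
      simpa only [sup_assoc] using hr.2 _ _ c hab
    exact hr.1.trans (hr.1.trans (hr.sup_sup (hr.1.refl a) (hr.1.symm hbc)) h) hbc
  le_antisymm q₁ q₂ := by
    induction q₁ using Quot.ind with | _ a
    induction q₂ using Quot.ind with | _ b
    intro (hab : r (a ⊔ b) b) (hba : r (b ⊔ a) a)
    exact Quot.sound <| hr.1.trans (hr.1.symm (sup_comm a b ▸ hba)) hab

end IsJoinCong

end JoinCong

section Closure

variable {α : Type*}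

theorem ClosureOperator.closure_sup_eq_iff [SemilatticeSup α] (c : ClosureOperator α)
    {a b : α} : c (a ⊔ b) = c b ↔ c a ≤ c b := by
  refine ⟨fun h => h ▸ c.monotone le_sup_left, fun h => le_antisymm ?_ (c.monotone le_sup_right)⟩
  exact c.closure_min (sup_le (c.le_closure_iff.2 h) (c.le_closure b)) (c.isClosed_closure b)

theorem ClosureOperator.isJoinCong_ker [SemilatticeSup α] (c : ClosureOperator α) :
    IsJoinCong fun a b => c a = c b :=
  ⟨⟨fun _ => rfl, Eq.symm, Eq.trans⟩, fun a b d (h : c a = c b) => by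
    change c (a ⊔ d) = c (b ⊔ d)
    rw [← c.closure_sup_closure_left, h, c.closure_sup_closure_left]⟩

def implClosure [CompleteLattice α] (R : α → α → Prop) : ClosureOperator α :=
  .ofCompletePred (fun w => ∀ x y, R x y → x ≤ w → y ≤ w) fun _ hs x y hR hx =>
    le_sInf fun w hw => hs w hw x y hR (hx.trans (sInf_le hw))

theorem isClosed_implClosure_iff [CompleteLattice α] {R : α → α → Prop} {w : α} :
    (implClosure R).IsClosed w ↔ ∀ x y, R x y → x ≤ w → y ≤ w :=
  Iff.rfl

theorem joinCongGen_iff_implClosure_eq [CompleteLattice α] [Finite α] {R : α → α → Prop}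
    (hR : ∀ x y, R x y → x ≤ y) {a b : α} :
    joinCongGen R a b ↔ implClosure R a = implClosure R b := by
  set c := implClosure R
  have hθ := isJoinCong_joinCongGen R
  refine ⟨c.isJoinCong_ker.of_joinCongGen fun x y hxy => ?_, fun h => ?_⟩
  · refine le_antisymm (c.monotone (hR x y hxy)) (c.closure_min ?_ (c.isClosed_closure x))
    exact (c.isClosed_closure x) x y hxy (c.le_closure x)
  suffices hc : ∀ a, joinCongGen R a (c a) from hθ.1.trans (hc a) (h ▸ hθ.1.symm (hc b))
  intro a
  obtain ⟨M, haM, hM⟩ := (Set.toFinite {d | joinCongGen R a d}).exists_maximal ⟨a, hθ.1.refl a⟩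
  have hmax : ∀ d, joinCongGen R a d → d ≤ M := fun d hd => by
    have hMd : joinCongGen R a (M ⊔ d) := by simpa only [sup_idem] using hθ.sup_sup haM hd
    exact le_sup_right.trans (hM hMd le_sup_left)
  have hM_closed : c.IsClosed M := fun x y hxy hxM => by
    have h := hθ.2 x y M (joinCongGen_of_rel hxy)
    rw [sup_eq_right.2 hxM] at h
    exact le_sup_left.trans (hmax _ (hθ.1.trans haM h))
  have hcM : c a ≤ M := c.closure_min (hmax a (hθ.1.refl a)) hM_closed
  have h := hθ.2 a M (c a) haM
  rw [sup_eq_right.2 (c.le_closure a), sup_eq_left.2 hcM] at h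
  exact hθ.1.trans haM (hθ.1.symm h)

theorem IsJoinCong.mk_eq_or_covBy [Lattice α] [IsUpperModularLattice α] {r : α → α → Prop}
    (hr : IsJoinCong r) {c : ClosureOperator α} (hrc : ∀ a b, r a b ↔ c a = c b)
    (hc : ∀ z t w, c.IsClosed z → z ⋖ t → c.IsClosed w → z < w → ¬ w < c t)
    {a b : α} (hab : a ⋖ b) :
    Quot.mk r a = Quot.mk r b ∨
      @CovBy _ hr.quotPartialOrder.toLT (Quot.mk r a) (Quot.mk r b) := by
  let := hr.quotPartialOrder
  have hle : ∀ a b, Quot.mk r a ≤ Quot.mk r b ↔ c a ≤ c b :=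
    fun a b => (hrc _ _).trans c.closure_sup_eq_iff
  have hlt : ∀ a b, Quot.mk r a < Quot.mk r b ↔ c a < c b := fun a b => by
    rw [lt_iff_le_not_ge, lt_iff_le_not_ge, hle, hle]
  by_cases hba : b ≤ c a
  · exact .inl <| Quot.sound <| (hrc a b).2 <|
      le_antisymm (c.monotone hab.le) (c.le_closure_iff.1 hba)
  have hinf : b ⊓ c a = a :=
    ((le_inf hab.le (c.le_closure a)).lt_or_eq.resolve_left fun h =>
      hab.2 h (inf_lt_left.2 hba)).symm
  have hcov : c a ⋖ b ⊔ c a := covBy_sup_of_inf_covBy_left (by rwa [hinf])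
  have hct : c (b ⊔ c a) = c b := by rw [c.closure_sup_closure_right, sup_eq_left.2 hab.le]
  have hab' : c a < c b := (c.monotone hab.le).lt_of_not_ge fun h => hba (c.le_closure_iff.2 h)
  refine .inr ⟨(hlt a b).2 hab', fun q h₁ h₂ => ?_⟩
  induction q using Quot.ind with | _ d
  exact hc _ _ _ (c.isClosed_closure a) hcov (c.isClosed_closure d) ((hlt a d).1 h₁)
    (hct ▸ (hlt d b).1 h₂)

end Closure

section Grid

variable {k m n : ℕ} {i j : Fin k → ℕ}

open Fin.NatCast

def cgGen (m n i j : ℕ) : Grid m n → Grid m n → Prop :=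
  fun a b =>
    b = ((i : Fin (m + 1)), (j : Fin (n + 1))) ∧
      (a = ((i : Fin (m + 1)), ((j - 1 : ℕ) : Fin (n + 1))) ∨
        a = (((i - 1 : ℕ) : Fin (m + 1)), (j : Fin (n + 1))))

theorem cg_eq_joinCongGen (m n i j : ℕ) : cg m n i j = joinCongGen (cgGen m n i j) := rfl

noncomputable def gridClosure (m n : ℕ) (i j : Fin k → ℕ) : ClosureOperator (Grid m n) :=
  implClosure fun a b => ∃ s, cgGen m n (i s) (j s) a b

def IsGridClosed (i j : Fin k → ℕ) (x y : ℕ) : Prop :=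
  ∀ s, (i s ≤ x → j s ≠ y + 1) ∧ (j s ≤ y → i s ≠ x + 1)

theorem isGridClosed_comm {x y : ℕ} : IsGridClosed j i y x ↔ IsGridClosed i j x y :=
  forall_congr' fun _ => and_comm

theorem exists_isGridClosed_row (hi : Function.Injective i) (him : ∀ s, i s ≤ m) {x y y' : ℕ}
    (hx : x < m) (hz : IsGridClosed i j x y) (hw : IsGridClosed i j x y') (hy : y < y') :
    ∃ x', x < x' ∧ x' ≤ m ∧ IsGridClosed i j x' y := by
  classical
  have hex : ∃ x', x < x' ∧ ∀ s, j s ≤ y → i s ≠ x' + 1 :=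
    ⟨m, hx, fun s _ => by have := him s; omega⟩
  refine ⟨Nat.find hex, (Nat.find_spec hex).1, Nat.find_min' hex ⟨hx, fun s _ => ?_⟩,
    fun s => ⟨fun hs hjs => ?_, (Nat.find_spec hex).2 s⟩⟩
  · have := him s; omega
  rcases lt_trichotomy (i s) (x + 1) with h | h | h
  · exact (hz s).1 (by omega) hjs
  · exact (hw s).2 (by omega) h
  · have := Nat.find_min hex (m := i s - 1) (by omega)
    push Not at this
    obtain ⟨s', hs'j, hs'i⟩ := this (by omega)
    rw [hi (show i s' = i s by omega)] at hs'j
    omega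

theorem le_of_cgGen (him : ∀ s, i s ≤ m) (hjn : ∀ s, j s ≤ n) {x y : Grid m n}
    (h : ∃ s, cgGen m n (i s) (j s) x y) : x ≤ y := by
  obtain ⟨s, rfl, rfl | rfl⟩ := h <;> have := him s <;> have := hjn s <;>
    simp (disch := omega) only [Prod.mk_le_mk, Fin.le_def, Fin.val_natCast, Nat.mod_eq_of_lt] <;>
    omega

theorem isClosed_gridClosure_iff (him : ∀ s, i s ≤ m) (hjn : ∀ s, j s ≤ n) {w : Grid m n} :
    (gridClosure m n i j).IsClosed w ↔ IsGridClosed i j w.1 w.2 := by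
  simp only [gridClosure, isClosed_implClosure_iff, cgGen]
  refine ⟨fun h s => ?_, fun h x y ⟨s, hy, hx⟩ hxw => ?_⟩
  · have h₁ := h _ _ ⟨s, rfl, .inl rfl⟩
    have h₂ := h _ _ ⟨s, rfl, .inr rfl⟩
    have := him s; have := hjn s
    simp (disch := omega) only [Prod.le_def, Fin.le_def, Fin.val_natCast, Nat.mod_eq_of_lt] at h₁ h₂
    omega
  · subst hy
    have := h s; have := him s; have := hjn s
    rcases hx with rfl | rfl <;>
      simp (disch := omega) only [Prod.le_def, Fin.le_def, Fin.val_natCast, Nat.mod_eq_of_lt]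
        at hxw ⊢ <;>
      omega

theorem gridClosure_not_lt_closure (hi : Function.Injective i) (hj : Function.Injective j)
    (him : ∀ s, i s ≤ m) (hjn : ∀ s, j s ≤ n) {z t w : Grid m n}
    (hz : (gridClosure m n i j).IsClosed z) (hzt : z ⋖ t)
    (hw : (gridClosure m n i j).IsClosed w) (hzw : z < w) :
    ¬ w < gridClosure m n i j t := by
  intro hwt
  have htw : ¬ t ≤ w := fun h => ((gridClosure m n i j).closure_min h hw).not_gt hwt
  suffices ∃ u, (gridClosure m n i j).IsClosed u ∧ t ≤ u ∧ ¬ w ≤ u by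
    obtain ⟨u, hu, htu, hwu⟩ := this
    exact hwu (hwt.le.trans ((gridClosure m n i j).closure_min htu hu))
  simp only [isClosed_gridClosure_iff him hjn] at hz hw ⊢
  obtain ⟨⟨z₁, hz₁⟩, ⟨z₂, hz₂⟩⟩ := z
  obtain ⟨⟨t₁, ht₁⟩, ⟨t₂, ht₂⟩⟩ := t
  obtain ⟨⟨w₁, hw₁⟩, ⟨w₂, hw₂⟩⟩ := w
  dsimp only at hz hw
  simp only [Prod.mk_covBy_mk_iff, Fin.covBy_iff, Nat.covBy_iff_add_one_eq, Fin.mk.injEq] at hzt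
  simp only [Prod.lt_iff, Prod.mk_le_mk, Fin.mk_le_mk, Fin.mk_lt_mk] at hzw htw
  rcases hzt with ⟨rfl, rfl⟩ | ⟨rfl, rfl⟩
  · obtain rfl : w₁ = z₁ := by omega
    obtain ⟨x, hzx, hxm, hx⟩ := exists_isGridClosed_row hi him (by omega) hz hw (by omega)
    exact ⟨(⟨x, by omega⟩, ⟨z₂, hz₂⟩), hx,
      by simp only [Prod.mk_le_mk, Fin.mk_le_mk]; omega,
      by simp only [Prod.mk_le_mk, Fin.mk_le_mk]; omega⟩
  · obtain rfl : w₂ = z₂ := by omega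
    obtain ⟨y, hzy, hyn, hy⟩ := exists_isGridClosed_row hj hjn (by omega)
      (isGridClosed_comm.2 hz) (isGridClosed_comm.2 hw) (by omega)
    exact ⟨(⟨z₁, hz₁⟩, ⟨y, by omega⟩), isGridClosed_comm.1 hy,
      by simp only [Prod.mk_le_mk, Fin.mk_le_mk]; omega,
      by simp only [Prod.mk_le_mk, Fin.mk_le_mk]; omega⟩

end Grid

theorem joinCongSup_cover_preserving_general (m n k : ℕ)
    (i j : Fin k → ℕ)
    (hmono : StrictMono i) (him : ∀ s, i s ≤ m)
    (hjinj : Function.Injective j) (hjn : ∀ s, j s ≤ n)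
    (β : Grid m n → Grid m n → Prop)
    (hβ : β = joinCongSup fun s : Fin k => cg m n (i s) (j s)) :
    Equivalence β ∧
    ∃ P : PartialOrder (Quot β),
      (∀ a b : Grid m n, P.le (Quot.mk β a) (Quot.mk β b) ↔ β (a ⊔ b) b) ∧
      ∀ a b : Grid m n, a ⋖ b →
        Quot.mk β a = Quot.mk β b ∨
          @CovBy _ P.toLT (Quot.mk β a) (Quot.mk β b) := by
  simp only [cg_eq_joinCongGen, joinCongSup_joinCongGen] at hβ
  have hcong : IsJoinCong β := hβ ▸ isJoinCong_joinCongGen _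
  have hβc : ∀ a b, β a b ↔ gridClosure m n i j a = gridClosure m n i j b := fun a b => by
    rw [hβ]
    exact joinCongGen_iff_implClosure_eq fun _ _ => le_of_cgGen him hjn
  refine ⟨hcong.1, hcong.quotPartialOrder, fun _ _ => Iff.rfl, fun _ _ hab => ?_⟩
  exact hcong.mk_eq_or_covBy hβc
    (fun _ _ _ => gridClosure_not_lt_closure hmono.injective hjinj him hjn) hab

/-- The join `β` of the join-congruences `cg(i_s, j_s)` of the grid `K_{m,n}`
(`1 ≤ i_1 < ⋯ < i_k ≤ m`, `j_1,…,j_k` pairwise distinct in `{1,…,n}`) is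
cover-preserving: `β` is an equivalence relation, the relation
`[a] ≤ [b] ↔ β (a ⊔ b) b` is a well-defined partial order on the quotient, and whenever
`a ⋖ b` in `K_{m,n}`, either `[a] = [b]` or `[a] ⋖ [b]` in the quotient. -/
theorem joinCongSup_cover_preserving (m n k : ℕ) (hm : 1 ≤ m) (hn : 1 ≤ n) (hk : 1 ≤ k)
    (i j : Fin k → ℕ)
    (hmono : StrictMono i) (hi1 : ∀ s, 1 ≤ i s) (him : ∀ s, i s ≤ m)
    (hjinj : Function.Injective j) (hj1 : ∀ s, 1 ≤ j s) (hjn : ∀ s, j s ≤ n)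
    (β : Grid m n → Grid m n → Prop)
    (hβ : β = joinCongSup fun s : Fin k => cg m n (i s) (j s)) :
    Equivalence β ∧
    ∃ P : PartialOrder (Quot β),
      (∀ a b : Grid m n, P.le (Quot.mk β a) (Quot.mk β b) ↔ β (a ⊔ b) b) ∧
      ∀ a b : Grid m n, a ⋖ b →
        Quot.mk β a = Quot.mk β b ∨
          @CovBy _ P.toLT (Quot.mk β a) (Quot.mk β b) :=
  joinCongSup_cover_preserving_general m n k i j hmono him hjinj hjn β hβ
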